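/- arXiv:1611.04656 — 2 statements merged into one kernel-verified Lean document; each statement's English description precedes it below -/
import Mathlib

section
/- Let k ≥ 1 be an integer, let ξ ∈ ℝᵏ, let R > 0, and let ψ : ℝᵏ → ℝ be a nonnegative C¹ function whose support is compact and contained in the open ball B(ξ,R). Then k² · ∫_{ℝᵏ} ψ(x)² dx ≤ 4R² · ∫_{ℝᵏ} ‖∇ψ(x)‖² dx. In particular, the Rayleigh quotient of any such test function is at least k²/D² where D = 2R is the diameter of the ball. -/
/-!
Integrating by parts against the Euler field `x - ξ`, whose divergence is `k`, gives
`k ∫ ψ² = -∫ ⟨∇(ψ²), x - ξ⟩ = -2 ∫ ψ ⟨∇ψ, x - ξ⟩ ≤ 2R ∫ |ψ| ‖∇ψ‖`, since `‖x - ξ‖ < R` on the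
support of `ψ`. Multiplying by `k` and applying `2ab ≤ a² + b²` to `a = k|ψ|`, `b = 2R‖∇ψ‖`
gives `k² ∫ ψ² ≤ (k² ∫ ψ² + 4R² ∫ ‖∇ψ‖²) / 2`. Nothing Euclidean is used: the inequality holds
with `‖Dψ‖` in any finite-dimensional normed space and for any Haar measure.
-/

open MeasureTheory Metric Real Module

variable {E : Type*} [NormedAddCommGroup E] [NormedSpace ℝ E]

theorem neg_mul_fderiv_sq_apply_sub_le {ψ : E → ℝ} {x ξ : E} {R c : ℝ} (hc : 0 ≤ c)
    (hψ : DifferentiableAt ℝ ψ x) (hx : ψ x ≠ 0 → ‖x - ξ‖ ≤ R) :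
    -(c * fderiv ℝ (fun y ↦ ψ y ^ 2) x (x - ξ))
      ≤ (c ^ 2 * ψ x ^ 2 + 4 * R ^ 2 * ‖fderiv ℝ ψ x‖ ^ 2) / 2 := by
  have hderiv : fderiv ℝ (fun y ↦ ψ y ^ 2) x (x - ξ) = 2 * (ψ x * fderiv ℝ ψ x (x - ξ)) := by
    simp [fderiv_fun_pow 2 hψ, mul_assoc]
  have hbound : -(ψ x * fderiv ℝ ψ x (x - ξ)) ≤ |ψ x| * (‖fderiv ℝ ψ x‖ * R) := by
    by_cases hψx : ψ x = 0
    · simp [hψx]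
    calc -(ψ x * fderiv ℝ ψ x (x - ξ)) ≤ |ψ x| * |fderiv ℝ ψ x (x - ξ)| :=
          (neg_le_abs _).trans (abs_mul _ _).le
      _ ≤ |ψ x| * (‖fderiv ℝ ψ x‖ * R) := by
          gcongr
          exact ((fderiv ℝ ψ x).le_opNorm _).trans (by gcongr; exact hx hψx)
  calc -(c * fderiv ℝ (fun y ↦ ψ y ^ 2) x (x - ξ))
      = 2 * c * -(ψ x * fderiv ℝ ψ x (x - ξ)) := by rw [hderiv]; ring
    _ ≤ 2 * c * (|ψ x| * (‖fderiv ℝ ψ x‖ * R)) := by gcongr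
    _ = 2 * (c * |ψ x|) * (2 * R * ‖fderiv ℝ ψ x‖) / 2 := by ring
    _ ≤ ((c * |ψ x|) ^ 2 + (2 * R * ‖fderiv ℝ ψ x‖) ^ 2) / 2 := by
        gcongr
        exact two_mul_le_add_sq _ _
    _ = (c ^ 2 * ψ x ^ 2 + 4 * R ^ 2 * ‖fderiv ℝ ψ x‖ ^ 2) / 2 := by
        rw [mul_pow, sq_abs]
        ring

section Integral

variable [MeasurableSpace E] {μ : Measure E}

theorem ContDiff.integrable_fderiv_apply_mul [OpensMeasurableSpace E]
    [IsFiniteMeasureOnCompacts μ] {f g : E → ℝ} (hf : ContDiff ℝ 1 f)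
    (hsupp : HasCompactSupport f) (hg : Continuous g) (v : E) :
    Integrable (fun x ↦ fderiv ℝ f x v * g x) μ :=
  (((hf.continuous_fderiv one_ne_zero).clm_apply continuous_const).mul hg)
    |>.integrable_of_hasCompactSupport (hsupp.fderiv_apply ℝ v).mul_right

variable [FiniteDimensional ℝ E] [BorelSpace E] [μ.IsAddHaarMeasure]

theorem integral_fderiv_apply_mul_sub_eq_neg {f : E → ℝ} (hf : ContDiff ℝ 1 f)
    (hsupp : HasCompactSupport f) (ℓ : E →L[ℝ] ℝ) (v ξ : E) :
    ∫ x, fderiv ℝ f x v * ℓ (x - ξ) ∂μ = -(ℓ v * ∫ x, f x ∂μ) := by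
  have hℓ : ∀ x, HasFDerivAt (fun y ↦ ℓ (y - ξ)) ℓ x := fun x ↦
    ℓ.hasFDerivAt.comp x ((hasFDerivAt_id x).sub_const ξ)
  have ibp := integral_mul_fderiv_eq_neg_fderiv_mul_of_integrable (μ := μ) (v := v)
    (f := f) (g := fun y ↦ ℓ (y - ξ))
    (hf.integrable_fderiv_apply_mul hsupp (by fun_prop) v)
    (by simpa only [(hℓ _).fderiv] using
      (hf.continuous.integrable_of_hasCompactSupport hsupp).mul_const (ℓ v))
    ((hf.continuous.mul (by fun_prop)).integrable_of_hasCompactSupport hsupp.mul_right)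
    (fun x _ ↦ hf.differentiable one_ne_zero x) (fun x _ ↦ (hℓ x).differentiableAt)
  simp only [(hℓ _).fderiv] at ibp
  rw [integral_mul_const] at ibp
  linarith

theorem integral_fderiv_apply_sub_eq_neg_finrank_mul {f : E → ℝ} (hf : ContDiff ℝ 1 f)
    (hsupp : HasCompactSupport f) (ξ : E) :
    ∫ x, fderiv ℝ f x (x - ξ) ∂μ = -(finrank ℝ E * ∫ x, f x ∂μ) := by
  let b := finBasis ℝ E
  let coord : Fin (finrank ℝ E) → E →L[ℝ] ℝ := fun i ↦ LinearMap.toContinuousLinearMap (b.coord i)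
  have hexpand : ∀ x, fderiv ℝ f x (x - ξ) = ∑ i, fderiv ℝ f x (b i) * coord i (x - ξ) := by
    intro x
    conv_lhs => rw [← b.sum_repr (x - ξ)]
    simp [coord, mul_comm]
  simp_rw [hexpand]
  rw [integral_finsetSum _ fun i _ ↦ hf.integrable_fderiv_apply_mul hsupp (by fun_prop) _]
  simp_rw [integral_fderiv_apply_mul_sub_eq_neg hf hsupp]
  simp [coord]

theorem finrank_sq_mul_integral_sq_le {ψ : E → ℝ} (hψ : ContDiff ℝ 1 ψ)
    (hsupp : HasCompactSupport ψ) {ξ : E} {R : ℝ} (hball : tsupport ψ ⊆ ball ξ R) :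
    (finrank ℝ E : ℝ) ^ 2 * ∫ x, ψ x ^ 2 ∂μ ≤ 4 * R ^ 2 * ∫ x, ‖fderiv ℝ ψ x‖ ^ 2 ∂μ := by
  have hψ2 : ContDiff ℝ 1 fun x ↦ ψ x ^ 2 := hψ.pow 2
  have hsupp2 : HasCompactSupport fun x ↦ ψ x ^ 2 :=
    hsupp.comp_left (g := fun t : ℝ ↦ t ^ 2) (zero_pow two_ne_zero)
  have hint : Integrable (fun x ↦ ψ x ^ 2) μ :=
    hψ2.continuous.integrable_of_hasCompactSupport hsupp2
  have hint' : Integrable (fun x ↦ ‖fderiv ℝ ψ x‖ ^ 2) μ := by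
    have hcont : Continuous fun x ↦ ‖fderiv ℝ ψ x‖ ^ 2 :=
      (hψ.continuous_fderiv one_ne_zero).norm.pow 2
    exact hcont.integrable_of_hasCompactSupport
      ((hsupp.fderiv ℝ).comp_left (g := fun L ↦ ‖L‖ ^ 2) (by simp))
  have hintD : Integrable (fun x ↦ fderiv ℝ (fun y ↦ ψ y ^ 2) x (x - ξ)) μ := by
    have hcont : Continuous fun x ↦ fderiv ℝ (fun y ↦ ψ y ^ 2) x (x - ξ) :=
      (hψ2.continuous_fderiv one_ne_zero).clm_apply (by fun_prop)
    refine hcont.integrable_of_hasCompactSupport ((hsupp2.fderiv ℝ).mono' fun x hx ↦ ?_)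
    exact subset_tsupport _ fun h ↦ hx (by simp [h])
  set n : ℝ := (finrank ℝ E : ℝ)
  have hpoint : ∀ x, -(n * fderiv ℝ (fun y ↦ ψ y ^ 2) x (x - ξ))
      ≤ (n ^ 2 * ψ x ^ 2 + 4 * R ^ 2 * ‖fderiv ℝ ψ x‖ ^ 2) / 2 := fun x ↦
    neg_mul_fderiv_sq_apply_sub_le (Nat.cast_nonneg _) (hψ.differentiable one_ne_zero x)
      fun hx ↦ (mem_ball_iff_norm.mp (hball (subset_tsupport _ hx))).le
  have hmono : ∫ x, -(n * fderiv ℝ (fun y ↦ ψ y ^ 2) x (x - ξ)) ∂μ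
      ≤ ∫ x, (n ^ 2 * ψ x ^ 2 + 4 * R ^ 2 * ‖fderiv ℝ ψ x‖ ^ 2) / 2 ∂μ :=
    integral_mono (hintD.const_mul _).neg
      (((hint.const_mul _).add (hint'.const_mul _)).div_const 2) hpoint
  rw [integral_neg, integral_const_mul, integral_fderiv_apply_sub_eq_neg_finrank_mul hψ2 hsupp2,
    integral_div, integral_add (hint.const_mul _) (hint'.const_mul _), integral_const_mul,
    integral_const_mul] at hmono
  linarith

end Integral

theorem eigenvalue_flat_general (k : ℕ) (ξ : EuclideanSpace ℝ (Fin k))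
    (R : ℝ) (ψ : EuclideanSpace ℝ (Fin k) → ℝ) (hψ : ContDiff ℝ 1 ψ)
    (hsupp : HasCompactSupport ψ) (hsupp' : tsupport ψ ⊆ ball ξ R) :
    (k : ℝ) ^ 2 * ∫ x : EuclideanSpace ℝ (Fin k), ψ x ^ 2
      ≤ 4 * R ^ 2 * ∫ x : EuclideanSpace ℝ (Fin k), ‖gradient ψ x‖ ^ 2 := by
  simpa [finrank_euclideanSpace_fin, gradient, LinearIsometryEquiv.norm_map] using
    finrank_sq_mul_integral_sq_le (μ := volume) hψ hsupp hsupp'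

/-- Flat case of the paper's Poincaré-type inequality underlying the eigenvalue estimate
`λ₁(M) ≥ (k²/D²)(1 − (D/k) sup|H|)` (Theorem `est-first-eigenv`): for a nonnegative `C¹`
function compactly supported in the open ball `B(ξ,R)` of `ℝᵏ`,
`k² ∫ ψ² ≤ 4R² ∫ ‖∇ψ‖²`. -/
theorem eigenvalue_flat (k : ℕ) (hk : 1 ≤ k) (ξ : EuclideanSpace ℝ (Fin k))
    (R : ℝ) (hR : 0 < R) (ψ : EuclideanSpace ℝ (Fin k) → ℝ) (hψ : ContDiff ℝ 1 ψ)
    (hsupp : HasCompactSupport ψ) (hsupp' : tsupport ψ ⊆ ball ξ R)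
    (hpos : ∀ x, 0 ≤ ψ x) :
    (k : ℝ) ^ 2 * ∫ x : EuclideanSpace ℝ (Fin k), ψ x ^ 2
      ≤ 4 * R ^ 2 * ∫ x : EuclideanSpace ℝ (Fin k), ‖gradient ψ x‖ ^ 2 :=
  eigenvalue_flat_general k ξ R ψ hψ hsupp hsupp'
end

section
/- Let p > 1, k, and γ be real numbers with γ < k and 2 − (p−1)(k−2) < γ, set q = p/(p−1) and E = ((k−γ)/p)·(γ−2+(p−1)(k−2)) (so E > 0). Then for all σ > 0 and ε > 0 one has (σ^p/p^{p−1})·[ (γ−2)(k−γ) − σ^q/q + (2(p−1)/p)·ε²·(k−γ−ε²/2) ] ≤ E^p/p^p, and equality holds if and only if ε² = k−γ and σ^q = E. -/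
/-!
Completing the square in `ε²` writes the bracket as `E - σ^q/q - ((p-1)/p)(ε² - (k-γ))²`, so the
two variables decouple. Since `pq = p + q`, Young's inequality `ab ≤ a^q/q + b^p/p` applied to
`a = σ^p`, `b = E` gives `σ^p (E - σ^q/q) ≤ E^p/p`, with equality iff `(σ^q)^p = E^p`; dividing by
`p^(p-1)` yields the bound `E^p/p^p`.
-/

open Real

namespace Real

variable {p q σ E : ℝ}

lemma rpow_rpow_of_holderConjugate (hpq : p.HolderConjugate q) (hσ : 0 ≤ σ) :
    (σ ^ p) ^ q = σ ^ p * σ ^ q := by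
  rw [← rpow_mul hσ, hpq.mul_eq_add, rpow_add' hσ (by linarith [hpq.pos, hpq.symm.pos])]

lemma rpow_mul_sub_rpow_div_le (hpq : p.HolderConjugate q) (hσ : 0 ≤ σ) (hE : 0 ≤ E) :
    σ ^ p * (E - σ ^ q / q) ≤ E ^ p / p := by
  have young := young_inequality_of_nonneg (rpow_nonneg hσ p) hE hpq.symm
  rw [rpow_rpow_of_holderConjugate hpq hσ] at young
  linarith [mul_div_assoc (σ ^ p) (σ ^ q) q]

lemma rpow_mul_sub_rpow_div_eq_iff (hpq : p.HolderConjugate q) (hσ : 0 ≤ σ) (hE : 0 ≤ E) :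
    σ ^ p * (E - σ ^ q / q) = E ^ p / p ↔ σ ^ q = E := by
  have young := young_inequality_eq_iff_of_nonneg (rpow_nonneg hσ p) hE hpq.symm
  rw [← rpow_left_inj (rpow_nonneg hσ q) hE hpq.ne_zero, ← rpow_mul hσ, mul_comm q,
    rpow_mul hσ, ← young, rpow_rpow_of_holderConjugate hpq hσ, mul_sub, mul_div_assoc]
  constructor <;> intro h <;> linarith

end Real

lemma rellich_bracket_eq_sub_sq (p k γ s ε : ℝ) (hp : p ≠ 0) :
    (γ - 2) * (k - γ) - s + 2 * (p - 1) / p * ε ^ 2 * (k - γ - ε ^ 2 / 2)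
      = (k - γ) / p * (γ - 2 + (p - 1) * (k - 2)) - s - (p - 1) / p * (ε ^ 2 - (k - γ)) ^ 2 := by
  field_simp
  ring

theorem rellich_optimization_general (p k γ : ℝ) (hp : 1 < p) (hγ₁ : 2 - (p - 1) * (k - 2) < γ)
    (hγ₂ : γ < k) (q E : ℝ) (hq : q = p / (p - 1))
    (hE : E = ((k - γ) / p) * (γ - 2 + (p - 1) * (k - 2)))
    (σ ε : ℝ) (hσ : 0 < σ) :
    0 < E
    ∧ σ ^ p / p ^ (p - 1) *
        ((γ - 2) * (k - γ) - σ ^ q / q + 2 * (p - 1) / p * ε ^ 2 * (k - γ - ε ^ 2 / 2))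
      ≤ E ^ p / p ^ p
    ∧ (σ ^ p / p ^ (p - 1) *
          ((γ - 2) * (k - γ) - σ ^ q / q + 2 * (p - 1) / p * ε ^ 2 * (k - γ - ε ^ 2 / 2))
        = E ^ p / p ^ p
      ↔ ε ^ 2 = k - γ ∧ σ ^ q = E) := by
  have hpq : p.HolderConjugate q := (holderConjugate_iff_eq_conjExponent hp).mpr hq
  have hp₀ : 0 < p := hpq.pos
  have hp₁ : 0 < p - 1 := hpq.sub_one_pos
  have hE₀ : 0 < E := by
    rw [hE]
    have : 0 < γ - 2 + (p - 1) * (k - 2) := by linarith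
    have : 0 < k - γ := by linarith
    positivity
  have decompose : σ ^ p / p ^ (p - 1) *
        ((γ - 2) * (k - γ) - σ ^ q / q + 2 * (p - 1) / p * ε ^ 2 * (k - γ - ε ^ 2 / 2))
      = σ ^ p * (E - σ ^ q / q) / p ^ (p - 1)
        + -(σ ^ p / p ^ (p - 1) * ((p - 1) / p * (ε ^ 2 - (k - γ)) ^ 2)) := by
    rw [rellich_bracket_eq_sub_sq p k γ _ ε hp₀.ne', ← hE]
    ring
  have target : E ^ p / p ^ p = E ^ p / p / p ^ (p - 1) + 0 := by
    rw [rpow_sub_one hp₀.ne', add_zero, div_div_div_cancel_right₀ hp₀.ne']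
  have hσE : σ ^ p * (E - σ ^ q / q) / p ^ (p - 1) ≤ E ^ p / p / p ^ (p - 1) := by
    gcongr
    exact rpow_mul_sub_rpow_div_le hpq hσ.le hE₀.le
  have penalty_nonpos : -(σ ^ p / p ^ (p - 1) * ((p - 1) / p * (ε ^ 2 - (k - γ)) ^ 2)) ≤ 0 := by
    simp only [neg_nonpos]
    positivity
  refine ⟨hE₀, decompose ▸ target ▸ add_le_add hσE penalty_nonpos, ?_⟩
  rw [decompose, target, add_eq_add_iff_eq_and_eq hσE penalty_nonpos, and_comm,
    div_left_inj' (rpow_pos_of_pos hp₀ _).ne', rpow_mul_sub_rpow_div_eq_iff hpq hσ.le hE₀.le]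
  simp [(rpow_pos_of_pos hσ p).ne', (rpow_pos_of_pos hp₀ (p - 1)).ne', hp₁.ne', hp₀.ne',
    sub_eq_zero]

/-- The two-variable optimization from the proof of the Rellich inequality: maximizing
`A(σ,ε) = (σ^p/p^{p−1})[(γ−2)(k−γ) − σ^q/q + (2(p−1)/p)ε²(k−γ−ε²/2)]` over `σ, ε > 0`
yields the sharp Rellich constant `E^p/p^p`, with equality iff `ε² = k−γ` and `σ^q = E`. -/
theorem rellich_optimization (p k γ : ℝ) (hp : 1 < p) (hγ₁ : 2 - (p - 1) * (k - 2) < γ)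
    (hγ₂ : γ < k) (q E : ℝ) (hq : q = p / (p - 1))
    (hE : E = ((k - γ) / p) * (γ - 2 + (p - 1) * (k - 2)))
    (σ ε : ℝ) (hσ : 0 < σ) (hε : 0 < ε) :
    0 < E
    ∧ σ ^ p / p ^ (p - 1) *
        ((γ - 2) * (k - γ) - σ ^ q / q + 2 * (p - 1) / p * ε ^ 2 * (k - γ - ε ^ 2 / 2))
      ≤ E ^ p / p ^ p
    ∧ (σ ^ p / p ^ (p - 1) *
          ((γ - 2) * (k - γ) - σ ^ q / q + 2 * (p - 1) / p * ε ^ 2 * (k - γ - ε ^ 2 / 2))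
        = E ^ p / p ^ p
      ↔ ε ^ 2 = k - γ ∧ σ ^ q = E) :=
  rellich_optimization_general p k γ hp hγ₁ hγ₂ q E hq hE σ ε hσ
end
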